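/- In the BZ-vesicle cellular automaton, the number of excited cells never increases: for any configuration on a finite hexagonal lattice with absorbing boundary, the number of cells in wave-fragment states at time t+1 is at most the number at time t. -/

import Mathlib

/-- Cell states of the BZ-vesicle cellular automaton: resting, refractory,
or an excited wave-fragment state directed in one of six directions
(indexed by `ZMod 6`: 0 = SE, 1 = SW, 2 = W, 3 = NW, 4 = NE, 5 = E). -/
inductive CellState
  | resting
  | refractory
  | wave (d : ZMod 6)
deriving DecidableEq

/-- Incidence vector with a single incoming wave from direction index `d`. -/
def single (d : ZMod 6) : ZMod 6 → Bool := fun i => decide (i = d)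

/-- Incidence vector with incoming waves at positions `d-1` and `d+1`. -/
def pair (d : ZMod 6) : ZMod 6 → Bool := fun i => decide (i = d - 1) || decide (i = d + 1)

/-- Incidence vector with incoming waves at positions `d-1`, `d`, `d+1`. -/
def triple (d : ZMod 6) : ZMod 6 → Bool :=
  fun i => decide (i = d - 1) || decide (i = d) || decide (i = d + 1)

/-- The incidence vector `s` triggers an outgoing wave in direction `d`. -/
def trigger (d : ZMod 6) (s : ZMod 6 → Bool) : Prop :=
  s = single d ∨ s = pair d ∨ s = triple d

instance (d : ZMod 6) (s : ZMod 6 → Bool) : Decidable (trigger d s) := by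
  unfold trigger; infer_instance

/-- Local transition rule of the BZ-vesicle cellular automaton. -/
def stepCell (q : CellState) (s : ZMod 6 → Bool) : CellState :=
  match q with
  | .resting =>
      if trigger 0 s then .wave 0
      else if trigger 1 s then .wave 1
      else if trigger 2 s then .wave 2
      else if trigger 3 s then .wave 3
      else if trigger 4 s then .wave 4
      else if trigger 5 s then .wave 5
      else .resting
  | .wave _ => .refractory
  | .refractory => .resting

/-- Displacement (in axial hexagonal coordinates on `ℤ × ℤ`) travelled by a
wave-fragment moving in direction `d`; opposite directions have opposite
offsets: `off (d + 3) = - off d`. -/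
def off : ZMod 6 → ℤ × ℤ := fun d =>
  if d = 0 then (1, 0)
  else if d = 1 then (0, 1)
  else if d = 2 then (-1, 1)
  else if d = 3 then (-1, 0)
  else if d = 4 then (0, -1)
  else (1, -1)

/-- Incidence vector of cell `x` in configuration `c`: neighbour `x - off i`
is read as active iff it carries the wave-fragment state directed toward `x`. -/
def incid (c : ℤ × ℤ → CellState) (x : ℤ × ℤ) : ZMod 6 → Bool :=
  fun i => decide (c (x - off i) = CellState.wave i)

/-- Synchronous update of a configuration on the finite lattice `L` with
absorbing boundary: cells outside `L` are permanently resting. -/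
def stepConf (L : Finset (ℤ × ℤ)) (c : ℤ × ℤ → CellState) : ℤ × ℤ → CellState :=
  fun x => if x ∈ L then stepCell (c x) (incid c x) else CellState.resting

/-- Whether a cell state is an excited (wave-fragment) state. -/
def isWave : CellState → Bool
  | .wave _ => true
  | _ => false

/-- Number of cells of `L` in excited (wave-fragment) states. -/
def excitedCount (L : Finset (ℤ × ℤ)) (c : ℤ × ℤ → CellState) : ℕ :=
  (L.filter (fun x => isWave (c x) = true)).card

/-!
Every cell that becomes excited at time `t + 1` receives at least one incoming wave, i.e. has a
neighbour that is excited at time `t` and directed towards it. Choosing one such neighbour for each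
newly excited cell gives an injection into the cells excited at time `t`: an excited cell has a
single direction, so it points at only one neighbour.
-/

lemma exists_true_of_trigger {d : ZMod 6} {s : ZMod 6 → Bool} (h : trigger d s) :
    ∃ i, s i = true := by
  rcases h with rfl | rfl | rfl
  · exact ⟨d, by simp [single]⟩
  · exact ⟨d + 1, by simp [pair]⟩
  · exact ⟨d, by simp [triple]⟩

lemma exists_true_of_isWave_stepCell {q : CellState} {s : ZMod 6 → Bool}
    (h : isWave (stepCell q s) = true) : ∃ i, s i = true := by
  cases q with
  | resting =>
    unfold stepCell at h
    split_ifs at h with h0 h1 h2 h3 h4 h5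
    exacts [exists_true_of_trigger h0, exists_true_of_trigger h1, exists_true_of_trigger h2,
      exists_true_of_trigger h3, exists_true_of_trigger h4, exists_true_of_trigger h5,
      absurd h (by simp [isWave])]
  | refractory | wave _ => simp [stepCell, isWave] at h

lemma mem_and_exists_incid_of_isWave_stepConf {L : Finset (ℤ × ℤ)} {c : ℤ × ℤ → CellState}
    {x : ℤ × ℤ} (h : isWave (stepConf L c x) = true) : x ∈ L ∧ ∃ i, incid c x i = true := by
  by_cases hx : x ∈ L
  · simp only [stepConf, hx, if_true] at h
    exact ⟨hx, exists_true_of_isWave_stepCell h⟩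
  · simp [stepConf, hx, isWave] at h

noncomputable def incomingDir (c : ℤ × ℤ → CellState) (x : ℤ × ℤ) : ZMod 6 :=
  Classical.epsilon fun i => incid c x i = true

lemma apply_sub_off_incomingDir {c : ℤ × ℤ → CellState} {x : ℤ × ℤ}
    (h : ∃ i, incid c x i = true) :
    c (x - off (incomingDir c x)) = .wave (incomingDir c x) := by
  have hdir : incid c x (incomingDir c x) = true := Classical.epsilon_spec h
  simpa [incid] using hdir

lemma injOn_sub_off {c : ℤ × ℤ → CellState} {S : Set (ℤ × ℤ)} (dir : ℤ × ℤ → ZMod 6)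
    (h : ∀ x ∈ S, c (x - off (dir x)) = .wave (dir x)) :
    S.InjOn fun x => x - off (dir x) := by
  intro x hx y hy hxy
  have hdir : dir x = dir y := by
    simpa [hxy, h y hy] using (h x hx).symm
  simpa [hdir] using hxy

/-- The number of excited cells never increases: for any configuration on a
finite hexagonal lattice with absorbing boundary, the number of cells in
wave-fragment states at time `t + 1` is at most the number at time `t`. -/
theorem excited_count_nonincreasing (L : Finset (ℤ × ℤ))
    (c : ℤ × ℤ → CellState) (hc : ∀ x ∉ L, c x = CellState.resting) :
    excitedCount L (stepConf L c) ≤ excitedCount L c := by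
  have hsrc : ∀ x ∈ (L.filter fun x => isWave (stepConf L c x) = true : Set (ℤ × ℤ)),
      c (x - off (incomingDir c x)) = .wave (incomingDir c x) := fun x hx =>
    apply_sub_off_incomingDir (mem_and_exists_incid_of_isWave_stepConf (Finset.mem_filter.1 hx).2).2
  refine Finset.card_le_card_of_injOn _ (fun x hx => ?_) (injOn_sub_off _ hsrc)
  have hwave := hsrc x hx
  refine Finset.mem_filter.2 ⟨?_, by simp [hwave, isWave]⟩
  by_contra hout
  simp [hc _ hout] at hwave
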